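/- Let G = (V, E) be a finite directed acyclic graph satisfying the ant-conservation condition with sources s_1, …, s_k and destinations t_1, …, t_k, let G' be the graph obtained by the tail construction, and let the weights w_e^i be defined from chosen paths R_i from s_i' to t_i'. Then G contains k pairwise edge-disjoint directed paths, the i-th from s_i to t_i, if and only if G' contains k pairwise edge-disjoint directed paths P_1, …, P_k, with P_i starting at s_i' and ending at some vertex of outdegree 0, whose total cost Σ_{i=1}^k Σ_{e ∈ P_i} w_e^i is at least k²·|V|. -/

import Mathlib

/-! Common setup: finite directed graphs as finsets of ordered pairs of vertices. -/

/-- The list of edges of a path given as a list of vertices. -/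
def pathEdges {V : Type} (p : List V) : List (V × V) := p.zip p.tail

/-- `p` is a directed path in the graph with edge set `E`: a nonempty sequence of
pairwise-distinct vertices in which consecutive vertices are joined by edges of `E`. -/
def IsPath {V : Type} [DecidableEq V] (E : Finset (V × V)) (p : List V) : Prop :=
  p ≠ [] ∧ p.Nodup ∧ p.Chain' (fun u v => (u, v) ∈ E)

/-- `p` is a directed path in `E` from `a` to `b`. -/
def IsPathFrom {V : Type} [DecidableEq V] (E : Finset (V × V)) (p : List V) (a b : V) : Prop :=
  IsPath E p ∧ p.head? = some a ∧ p.getLast? = some b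

/-- The indegree of vertex `v`. -/
def indeg {V : Type} [DecidableEq V] (E : Finset (V × V)) (v : V) : ℕ :=
  (E.filter (fun e => e.2 = v)).card

/-- The outdegree of vertex `v`. -/
def outdeg {V : Type} [DecidableEq V] (E : Finset (V × V)) (v : V) : ℕ :=
  (E.filter (fun e => e.1 = v)).card

/-- A directed cycle: a sequence `v₀, v₁, …, v_ℓ = v₀` with `ℓ ≥ 1` and all
`(v_j, v_{j+1})` edges. -/
def IsCycle {V : Type} [DecidableEq V] (E : Finset (V × V)) (p : List V) : Prop :=
  2 ≤ p.length ∧ p.Chain' (fun u v => (u, v) ∈ E) ∧ p.head? = p.getLast?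

/-- The graph is acyclic: it contains no directed cycle. -/
def Acyclic {V : Type} [DecidableEq V] (E : Finset (V × V)) : Prop :=
  ∀ p : List V, ¬ IsCycle E p

/-- The ant-conservation condition for a directed graph with edge set `E`, with `k`
distinguished sources `s 1, …, s k` (exactly the vertices of indegree 0) and `k`
distinguished destinations `t 1, …, t k` (exactly the vertices of outdegree 0):
`Σᵢ outdeg (s i) = Σᵢ indeg (t i) = k`, and `indeg v = outdeg v` for every
intermediate vertex `v`. -/
structure AntConservation {V : Type} [DecidableEq V]
    (E : Finset (V × V)) (k : ℕ) (s t : Fin k → V) : Prop where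
  s_inj : Function.Injective s
  t_inj : Function.Injective t
  sources : ∀ v, indeg E v = 0 ↔ ∃ i, s i = v
  dests : ∀ v, outdeg E v = 0 ↔ ∃ i, t i = v
  out_sum : ∑ i, outdeg E (s i) = k
  in_sum : ∑ i, indeg E (t i) = k
  conserve : ∀ v, (¬ ∃ i, s i = v) → (¬ ∃ i, t i = v) → indeg E v = outdeg E v

/-- The paths `P 1, …, P k` are pairwise edge-disjoint. -/
def EdgeDisjoint {V : Type} {k : ℕ} (P : Fin k → List V) : Prop :=
  ∀ i j, i ≠ j → ∀ e, e ∈ pathEdges (P i) → e ∉ pathEdges (P j)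

/-- The total weight of the edges of a path under an edge-weight function. -/
def listWeight {V : Type} (wt : V × V → ℕ) (p : List V) : ℕ :=
  ((pathEdges p).map wt).sum

/-! ### The tail construction
`G'` lives on the vertex type `V ⊕ Fin k ⊕ (Fin k × Fin (k * |V|))`, where `Sum.inl v`
is an original vertex, `Sum.inr (Sum.inl i)` is the new source `sᵢ'`, and
`Sum.inr (Sum.inr (i, m))` is the `(m+1)`-st vertex `t_{i,m+1}` of the `i`-th tail
(so `tᵢ' = t_{i,k|V|}` is the tail vertex with index `m = k * |V| - 1`). -/

/-- Adjacency of the tail-construction graph `G'`: the edges of `G`, an edge `(sᵢ', sᵢ)`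
for each `i`, an edge from `tᵢ` to the first vertex of the `i`-th tail, and the edges
along each tail path. -/
def tailAdj {V : Type} [Fintype V] [DecidableEq V] {k : ℕ} (E : Finset (V × V))
    (s t : Fin k → V)
    (e : (V ⊕ Fin k ⊕ Fin k × Fin (k * Fintype.card V)) ×
         (V ⊕ Fin k ⊕ Fin k × Fin (k * Fintype.card V))) : Bool :=
  match e with
  | (Sum.inl u, Sum.inl v) => decide ((u, v) ∈ E)
  | (Sum.inr (Sum.inl i), Sum.inl v) => decide (v = s i)
  | (Sum.inl u, Sum.inr (Sum.inr (i, m))) => decide (u = t i) && decide ((m : ℕ) = 0)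
  | (Sum.inr (Sum.inr (i, m)), Sum.inr (Sum.inr (j, m'))) =>
      decide (i = j) && decide ((m' : ℕ) = (m : ℕ) + 1)
  | _ => false

/-- The edge set of the tail-construction graph `G'`. -/
def tailEdges {V : Type} [Fintype V] [DecidableEq V] {k : ℕ} (E : Finset (V × V))
    (s t : Fin k → V) :
    Finset ((V ⊕ Fin k ⊕ Fin k × Fin (k * Fintype.card V)) ×
            (V ⊕ Fin k ⊕ Fin k × Fin (k * Fintype.card V))) :=
  Finset.univ.filter (fun e => tailAdj E s t e = true)

/-- `z` is the last vertex `tᵢ' = t_{i, k|V|}` of the `i`-th tail. -/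
def IsLastTail {V : Type} [Fintype V] {k : ℕ} (i : Fin k)
    (z : V ⊕ Fin k ⊕ Fin k × Fin (k * Fintype.card V)) : Prop :=
  ∃ m : Fin (k * Fintype.card V), (m : ℕ) + 1 = k * Fintype.card V ∧
    z = Sum.inr (Sum.inr (i, m))

/-!
Extending a path `Qᵢ` of `G` by the edge `(sᵢ', sᵢ)` and the whole `i`-th tail gives a path of
`G'` that shares all `k|V|` tail edges with `Rᵢ`, because the only way for `Rᵢ` to reach `tᵢ'`
is through the entire `i`-th tail; so these paths have total cost at least `k²|V|`.

Conversely, the cost of `Pᵢ` counts the edges it shares with `Rᵢ`. These have pairwise distinct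
heads, all in `V` or in the `i`-th tail, so the cost is at most `|V| + k|V|`. If `Pᵢ` avoids the
edge `(tᵢ, t_{i,1})`, it never enters the `i`-th tail and never reaches `tᵢ` (whose only
out-edge in `G'` is that one, while `Pᵢ` must end at a sink), so its cost is below `|V|` and the
total falls short of `k²|V|`. Hence every `Pᵢ` passes through `(tᵢ, t_{i,1})`; since a path
never leaves a tail once inside, its segment from `sᵢ` to `tᵢ` lies in `G`.
-/

section PathEdges

variable {α β : Type}

@[simp] theorem pathEdges_nil : pathEdges ([] : List α) = [] := rfl

@[simp] theorem pathEdges_singleton (a : α) : pathEdges [a] = [] := rfl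

@[simp] theorem pathEdges_cons_cons (a b : α) (l : List α) :
    pathEdges (a :: b :: l) = (a, b) :: pathEdges (b :: l) := rfl

theorem mem_pathEdges_append {l₁ l₂ : List α} {e : α × α} :
    e ∈ pathEdges (l₁ ++ l₂) ↔
      e ∈ pathEdges l₁ ∨ e ∈ pathEdges l₂ ∨ (e.1 ∈ l₁.getLast? ∧ e.2 ∈ l₂.head?) := by
  induction l₁ with
  | nil => simp
  | cons a l₁ ih =>
    cases l₁ with
    | nil => cases l₂ <;> simp [Prod.ext_iff, eq_comm, or_comm]
    | cons b l₁ =>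
      rw [List.cons_append, List.cons_append, pathEdges_cons_cons, List.mem_cons,
        ← List.cons_append, ih, pathEdges_cons_cons, List.mem_cons, List.getLast?_cons_cons]
      tauto

theorem pathEdges_map (f : α → β) (l : List α) :
    pathEdges (l.map f) = (pathEdges l).map (Prod.map f f) := by
  rw [pathEdges, pathEdges, ← List.map_tail, List.zip_map]

theorem map_snd_pathEdges (l : List α) : (pathEdges l).map Prod.snd = l.tail :=
  List.map_snd_zip (by cases l <;> simp)

theorem map_fst_pathEdges (l : List α) : (pathEdges l).map Prod.fst = l.dropLast := by
  induction l with
  | nil => rfl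
  | cons a l ih => cases l <;> simp_all

theorem nodup_pathEdges {l : List α} (h : l.Nodup) : (pathEdges l).Nodup :=
  List.Nodup.of_map Prod.fst (map_fst_pathEdges l ▸ h.sublist l.dropLast_sublist)

theorem injOn_snd_pathEdges {l : List α} (h : l.Nodup) :
    Set.InjOn Prod.snd {e | e ∈ pathEdges l} := fun _ he _ he' =>
  List.inj_on_of_nodup_map (map_snd_pathEdges l ▸ h.tail) he he'

theorem fst_mem_of_mem_pathEdges {l : List α} {e : α × α} (h : e ∈ pathEdges l) : e.1 ∈ l :=
  List.mem_of_mem_dropLast (map_fst_pathEdges l ▸ List.mem_map_of_mem h)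

theorem snd_mem_of_mem_pathEdges {l : List α} {e : α × α} (h : e ∈ pathEdges l) : e.2 ∈ l :=
  List.mem_of_mem_tail (map_snd_pathEdges l ▸ List.mem_map_of_mem h)

theorem exists_mem_pathEdges_of_mem_of_head?_ne {l : List α} {b : α} (hb : b ∈ l)
    (hne : l.head? ≠ some b) : ∃ a, (a, b) ∈ pathEdges l := by
  have : b ∈ (pathEdges l).map Prod.snd := by
    rw [map_snd_pathEdges]
    cases l with
    | nil => simp at hb
    | cons c l => exact (List.mem_cons.mp hb).resolve_left (by rintro rfl; simp at hne)
  obtain ⟨⟨a, b⟩, he, rfl⟩ := List.mem_map.mp this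
  exact ⟨a, he⟩

theorem exists_mem_pathEdges_of_mem_of_getLast?_ne {l : List α} {a : α} (ha : a ∈ l)
    (hne : l.getLast? ≠ some a) : ∃ b, (a, b) ∈ pathEdges l := by
  have : a ∈ (pathEdges l).map Prod.fst := by
    rw [map_fst_pathEdges]
    exact List.mem_dropLast_of_mem_of_ne_getLast? ha (Ne.symm hne)
  obtain ⟨⟨a, b⟩, he, rfl⟩ := List.mem_map.mp this
  exact ⟨b, he⟩

theorem List.IsChain.rel_of_mem_pathEdges {R : α → α → Prop} {l : List α} (h : l.IsChain R)
    {a b : α} (he : (a, b) ∈ pathEdges l) : R a b := by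
  induction l with
  | nil => simp at he
  | cons a l ih =>
    cases l with
    | nil => simp at he
    | cons b l =>
      rw [List.isChain_cons_cons] at h
      rcases List.mem_cons.mp he with he | he
      · obtain ⟨rfl, rfl⟩ := Prod.mk.inj he
        exact h.1
      · exact ih h.2 he

end PathEdges

theorem listWeight_eq_card_inter {W : Type} [DecidableEq W] {wt : W × W → ℕ} {p : List W}
    (r : List W) (hp : p.Nodup)
    (hwt : ∀ e, (e ∈ pathEdges r → wt e = 1) ∧ (e ∉ pathEdges r → wt e = 0)) :
    listWeight wt p = ((pathEdges p).toFinset ∩ (pathEdges r).toFinset).card := by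
  have hind : ∀ e, wt e = if e ∈ (pathEdges r).toFinset then 1 else 0 := fun e => by
    by_cases he : e ∈ pathEdges r <;> simp [he, hwt e]
  rw [listWeight, ← List.sum_toFinset _ (nodup_pathEdges hp),
    Finset.sum_congr rfl fun e _ => hind e, Finset.sum_boole, Finset.filter_mem_eq_inter, Nat.cast_id]

theorem outdeg_eq_zero_iff {W : Type} [DecidableEq W] {F : Finset (W × W)} {v : W} :
    outdeg F v = 0 ↔ ∀ x, (v, x) ∉ F := by
  simp only [outdeg, Finset.card_eq_zero, Finset.filter_eq_empty_iff, Prod.forall]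
  exact ⟨fun h x hx => h _ _ hx rfl, fun h a b hab hav => h b (hav ▸ hab)⟩

theorem le_add_of_forall_le_of_card_mul_le {ι : Type} [Fintype ι] [DecidableEq ι] {f : ι → ℕ}
    {M d : ℕ} (hf : ∀ i, f i ≤ M) (hsum : Fintype.card ι * M ≤ ∑ i, f i + d) (i : ι) :
    M ≤ f i + d := by
  have hrest : ∑ j ∈ Finset.univ.erase i, f j ≤ (Fintype.card ι - 1) * M := by
    simpa [Finset.card_erase_of_mem] using
      Finset.sum_le_card_nsmul _ _ _ fun j (_ : j ∈ Finset.univ.erase i) => hf j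
  rw [← Finset.add_sum_erase _ _ (Finset.mem_univ i)] at hsum
  obtain ⟨n, hn⟩ : ∃ n, Fintype.card ι = n + 1 := ⟨_, (Nat.succ_pred_eq_of_pos
    (Fintype.card_pos_iff.mpr ⟨i⟩)).symm⟩
  rw [hn, Nat.add_sub_cancel] at hrest
  rw [hn] at hsum
  nlinarith

section TailGraph

variable {V : Type} [Fintype V] [DecidableEq V] {k : ℕ} {E : Finset (V × V)} {s t : Fin k → V}

abbrev ExtVertex (V : Type) [Fintype V] (k : ℕ) : Type :=
  V ⊕ Fin k ⊕ Fin k × Fin (k * Fintype.card V)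

def tailPred (t : Fin k → V) (i : Fin k) (m : Fin (k * Fintype.card V)) : ExtVertex V k :=
  if (m : ℕ) = 0 then .inl (t i) else .inr (.inr (i, ⟨m - 1, by omega⟩))

theorem mem_tailEdges {e : ExtVertex V k × ExtVertex V k} :
    e ∈ tailEdges E s t ↔ tailAdj E s t e = true := by
  simp [tailEdges]

theorem mem_tailEdges_inl_inl {u v : V} :
    ((.inl u, .inl v) : ExtVertex V k × ExtVertex V k) ∈ tailEdges E s t ↔ (u, v) ∈ E := by
  simp [mem_tailEdges, tailAdj]

theorem mem_tailEdges_source {i : Fin k} {x : ExtVertex V k} :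
    (.inr (.inl i), x) ∈ tailEdges E s t ↔ x = .inl (s i) := by
  rcases x with v | j | ⟨j, m⟩ <;> simp [mem_tailEdges, tailAdj]

theorem notMem_tailEdges_into_source {j : Fin k} {x : ExtVertex V k} :
    (x, .inr (.inl j)) ∉ tailEdges E s t := by
  rcases x with v | j' | ⟨j', m⟩ <;> simp [mem_tailEdges, tailAdj]

theorem mem_tailEdges_into_tail {x : ExtVertex V k} {i : Fin k} {m : Fin (k * Fintype.card V)} :
    (x, .inr (.inr (i, m))) ∈ tailEdges E s t ↔ x = tailPred t i m := by
  unfold tailPred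
  split_ifs with h0
  · rcases x with v | j | ⟨j, m'⟩ <;> simp [mem_tailEdges, tailAdj, h0, eq_comm]
  · rcases x with v | j | ⟨j, m'⟩ <;> simp [mem_tailEdges, tailAdj, h0, Fin.ext_iff]
    omega

theorem mem_tailEdges_from_tail {i : Fin k} {m : Fin (k * Fintype.card V)} {x : ExtVertex V k} :
    (.inr (.inr (i, m)), x) ∈ tailEdges E s t ↔
      ∃ m' : Fin (k * Fintype.card V), (m' : ℕ) = m + 1 ∧ x = .inr (.inr (i, m')) := by
  rcases x with v | j | ⟨j, m'⟩ <;> simp [mem_tailEdges, tailAdj]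
  aesop

theorem mem_tailEdges_from_dest (hac : AntConservation E k s t) {i : Fin k} {x : ExtVertex V k} :
    (.inl (t i), x) ∈ tailEdges E s t ↔
      ∃ m : Fin (k * Fintype.card V), (m : ℕ) = 0 ∧ x = .inr (.inr (i, m)) := by
  have hout := outdeg_eq_zero_iff.mp ((hac.dests (t i)).mpr ⟨i, rfl⟩)
  rcases x with v | j | ⟨j, m⟩ <;> simp [mem_tailEdges, tailAdj, hout]
  rw [hac.t_inj.eq_iff, eq_comm, and_comm]

theorem outdeg_tailEdges_inl_ne_zero (hac : AntConservation E k s t)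
    (hN : 0 < k * Fintype.card V) (v : V) : outdeg (tailEdges E s t) (.inl v) ≠ 0 := by
  rw [Ne, outdeg_eq_zero_iff]
  push Not
  by_cases hv : outdeg E v = 0
  · obtain ⟨j, rfl⟩ := (hac.dests v).mp hv
    exact ⟨_, (mem_tailEdges_from_dest hac).mpr ⟨⟨0, hN⟩, rfl, rfl⟩⟩
  · obtain ⟨x, hx⟩ := not_forall_not.mp (mt outdeg_eq_zero_iff.mpr hv)
    exact ⟨.inl x, mem_tailEdges_inl_inl.mpr hx⟩

theorem outdeg_tailEdges_lastTail {i : Fin k} {m : Fin (k * Fintype.card V)}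
    (hm : (m : ℕ) + 1 = k * Fintype.card V) :
    outdeg (tailEdges E s t) (.inr (.inr (i, m))) = 0 := by
  refine outdeg_eq_zero_iff.mpr fun x hx => ?_
  obtain ⟨m', hm', -⟩ := mem_tailEdges_from_tail.mp hx
  omega

def InTail (i : Fin k) (x : ExtVertex V k) : Prop :=
  ∃ m : Fin (k * Fintype.card V), x = .inr (.inr (i, m))

theorem InTail.of_mem_tailEdges {i : Fin k} {x y : ExtVertex V k}
    (hxy : (x, y) ∈ tailEdges E s t) (hx : InTail i x) : InTail i y := by
  obtain ⟨m, rfl⟩ := hx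
  obtain ⟨m', -, rfl⟩ := mem_tailEdges_from_tail.mp hxy
  exact ⟨m', rfl⟩

variable {l : List (ExtVertex V k)}

theorem inTail_of_mem_getLast? (hl : l.IsChain fun x y => (x, y) ∈ tailEdges E s t)
    {i : Fin k} {x : ExtVertex V k} (hx : x ∈ l) (hxi : InTail i x) :
    ∀ z ∈ l.getLast?, InTail i z := by
  obtain ⟨l₁, l₂, rfl⟩ := List.append_of_mem hx
  have hsuffix := hl.right_of_append
  intro z hz
  rw [List.getLast?_append_cons, Option.mem_def] at hz
  rcases List.mem_cons.mp (List.mem_of_getLast? hz) with rfl | hz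
  · exact hxi
  · exact hsuffix.cons_induction _ _ (fun _ _ => InTail.of_mem_tailEdges) hxi z hz

theorem snd_inl_or_inTail_of_mem_pathEdges (hl : l.IsChain fun x y => (x, y) ∈ tailEdges E s t)
    {i : Fin k} {z : ExtVertex V k} (hlast : l.getLast? = some z) (hz : InTail i z)
    {e : ExtVertex V k × ExtVertex V k} (he : e ∈ pathEdges l) :
    (∃ v, e.2 = .inl v) ∨ InTail i e.2 := by
  obtain ⟨a, b⟩ := e
  rcases b with v | j | ⟨j, m⟩
  · exact .inl ⟨v, rfl⟩
  · exact absurd (hl.rel_of_mem_pathEdges he) notMem_tailEdges_into_source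
  · obtain ⟨m', hm'⟩ := inTail_of_mem_getLast? hl (snd_mem_of_mem_pathEdges he) ⟨m, rfl⟩ z hlast
    obtain ⟨m'', rfl⟩ := hz
    simp only [Sum.inr.injEq, Prod.mk.injEq] at hm'
    exact .inr ⟨m, by rw [hm'.1]⟩

theorem tailPred_mem_pathEdges (hl : l.IsChain fun x y => (x, y) ∈ tailEdges E s t) {j : Fin k}
    (hh : l.head? = some (.inr (.inl j))) {i : Fin k} {m : Fin (k * Fintype.card V)}
    (hm : .inr (.inr (i, m)) ∈ l) : (tailPred t i m, .inr (.inr (i, m))) ∈ pathEdges l := by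
  obtain ⟨a, ha⟩ := exists_mem_pathEdges_of_mem_of_head?_ne hm (by rw [hh]; simp)
  rwa [mem_tailEdges_into_tail.mp (hl.rel_of_mem_pathEdges ha)] at ha

theorem tail_mem_of_le (hl : l.IsChain fun x y => (x, y) ∈ tailEdges E s t) {j : Fin k}
    (hh : l.head? = some (.inr (.inl j))) {i : Fin k} {m m' : Fin (k * Fintype.card V)}
    (hm : .inr (.inr (i, m)) ∈ l) (hle : m' ≤ m) : .inr (.inr (i, m')) ∈ l := by
  obtain ⟨d, hd⟩ := Nat.exists_eq_add_of_le (Fin.le_def.mp hle)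
  induction d generalizing m with
  | zero => rwa [show m' = m from Fin.ext hd.symm]
  | succ d ih =>
    have hpred := fst_mem_of_mem_pathEdges (tailPred_mem_pathEdges (t := t) hl hh hm)
    rw [tailPred, if_neg (by omega)] at hpred
    exact ih hpred (Fin.le_def.mpr (by simp; omega)) (by simp; omega)

theorem exists_eq_map_inl_append (hl : l.IsChain fun x y => (x, y) ∈ tailEdges E s t)
    (hh : ∀ j, l.head? ≠ some (.inr (.inl j))) :
    ∃ (q : List V) (u : List (ExtVertex V k)),
      l = q.map .inl ++ u ∧ ∀ x ∈ u, ∃ j, InTail j x := by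
  induction l with
  | nil => exact ⟨[], [], rfl, by simp⟩
  | cons x l ih =>
    rcases x with v | j | ⟨j, m⟩
    · obtain ⟨q, u, rfl, hu⟩ := ih hl.tail fun j hj =>
        notMem_tailEdges_into_source (hl.rel_head? (Option.mem_def.mpr hj))
      exact ⟨v :: q, u, rfl, hu⟩
    · exact absurd rfl (hh j)
    · refine ⟨[], _, rfl, List.forall_mem_cons.mpr ⟨⟨j, m, rfl⟩, fun y hy => ⟨j, ?_⟩⟩⟩
      exact hl.cons_induction _ _ (fun _ _ => InTail.of_mem_tailEdges) ⟨m, rfl⟩ y hy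

theorem le_card_inter_pathEdges {p r : List (ExtVertex V k)}
    (hp : p.IsChain fun x y => (x, y) ∈ tailEdges E s t) {j : Fin k}
    (hph : p.head? = some (.inr (.inl j)))
    (hr : r.IsChain fun x y => (x, y) ∈ tailEdges E s t) {j' : Fin k}
    (hrh : r.head? = some (.inr (.inl j'))) {i : Fin k} {m : Fin (k * Fintype.card V)}
    (hm : (m : ℕ) + 1 = k * Fintype.card V)
    (hpm : .inr (.inr (i, m)) ∈ p) (hrm : .inr (.inr (i, m)) ∈ r) :
    k * Fintype.card V ≤ ((pathEdges p).toFinset ∩ (pathEdges r).toFinset).card := by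
  have hle (m' : Fin (k * Fintype.card V)) : m' ≤ m := Fin.le_def.mpr (by omega)
  have hinj : Function.Injective fun m' : Fin (k * Fintype.card V) =>
      (tailPred t i m', (.inr (.inr (i, m')) : ExtVertex V k)) := fun a b h => by
    simpa using congrArg Prod.snd h
  calc k * Fintype.card V = (Finset.univ.image fun m' : Fin (k * Fintype.card V) =>
        (tailPred t i m', (.inr (.inr (i, m')) : ExtVertex V k))).card := by
        rw [Finset.card_image_of_injective _ hinj, Finset.card_univ, Fintype.card_fin]
    _ ≤ _ := Finset.card_le_card fun e he => by
        obtain ⟨m', -, rfl⟩ := Finset.mem_image.mp he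
        simpa using ⟨tailPred_mem_pathEdges hp hph (tail_mem_of_le hp hph hpm (hle m')),
          tailPred_mem_pathEdges hr hrh (tail_mem_of_le hr hrh hrm (hle m'))⟩

end TailGraph

section Forward

variable {V : Type} [Fintype V] {k : ℕ} {E : Finset (V × V)} {s t : Fin k → V}

/-- The path `sᵢ', q, t_{i,1}, …, t_{i,k|V|}` of `G'` obtained from a path `q` of `G`. -/
def liftPath (q : List V) (i : Fin k) : List (ExtVertex V k) :=
  .inr (.inl i) :: (q.map .inl ++ List.ofFn fun m => .inr (.inr (i, m)))

theorem isPathFrom_liftPath [DecidableEq V] {q : List V} {i : Fin k}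
    (hq : IsPathFrom E q (s i) (t i))
    {m : Fin (k * Fintype.card V)} (hm : (m : ℕ) + 1 = k * Fintype.card V) :
    IsPathFrom (tailEdges E s t) (liftPath q i) (.inr (.inl i)) (.inr (.inr (i, m))) := by
  obtain ⟨⟨-, hnd, hch⟩, hhead, hlast⟩ := hq
  set tailList : List (ExtVertex V k) := List.ofFn fun m => .inr (.inr (i, m))
  have htail : tailList.IsChain fun x y => (x, y) ∈ tailEdges E s t :=
    List.isChain_ofFn.mpr fun n hn => mem_tailEdges_from_tail.mpr ⟨_, rfl, rfl⟩
  have htail_head : tailList.head? = some (.inr (.inr (i, ⟨0, m.pos⟩))) := by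
    rw [List.head?_eq_getElem?, List.getElem?_ofFn, dif_pos m.pos]
  have htail_last : tailList.getLast? = some (.inr (.inr (i, m))) := by
    rw [List.getLast?_eq_getElem?, List.length_ofFn, List.getElem?_ofFn, dif_pos (by omega)]
    congr; omega
  refine ⟨⟨List.cons_ne_nil _ _, ?_, ?_⟩, rfl, ?_⟩
  · simp [liftPath, List.nodup_append, List.nodup_ofFn, hnd.map Sum.inl_injective,
      Function.Injective, List.mem_ofFn]
  · refine List.IsChain.cons ?_ fun y hy => mem_tailEdges_source.mpr ?_
    · refine (List.isChain_map _ |>.mpr (hch.imp fun _ _ => mem_tailEdges_inl_inl.mpr)).append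
        htail fun x hx y hy => ?_
      rw [List.getLast?_map, hlast, Option.map_some, Option.mem_some_iff] at hx
      rw [htail_head, Option.mem_some_iff] at hy
      rw [← hx, ← hy, mem_tailEdges_into_tail, tailPred, if_pos rfl]
    · simpa [hhead, eq_comm] using hy
  · rw [liftPath, List.getLast?_cons, List.getLast?_append, htail_last]
    rfl

theorem mem_pathEdges_liftPath {q : List V} {i : Fin k} (hhead : q.head? = some (s i))
    {e : ExtVertex V k × ExtVertex V k} (he : e ∈ pathEdges (liftPath q i)) :
    e = (.inr (.inl i), .inl (s i)) ∨ (∃ e' ∈ pathEdges q, e = Prod.map .inl .inl e') ∨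
      InTail i e.2 := by
  rw [liftPath, ← List.singleton_append, mem_pathEdges_append, mem_pathEdges_append,
    pathEdges_map] at he
  rcases he with he | (he | he | ⟨-, he⟩) | ⟨he₁, he₂⟩
  · simp at he
  · obtain ⟨e', he', rfl⟩ := List.mem_map.mp he
    exact .inr (.inl ⟨e', he', rfl⟩)
  · exact .inr (.inr ((List.mem_ofFn.mp (snd_mem_of_mem_pathEdges he)).imp fun _ => Eq.symm))
  · exact .inr (.inr ((List.mem_ofFn.mp (List.mem_of_mem_head? he)).imp fun _ => Eq.symm))
  · simp only [List.getLast?_singleton, Option.mem_some_iff, List.head?_append, List.head?_map,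
      hhead, Option.map_some, Option.some_or] at he₁ he₂
    exact .inl (Prod.ext he₁.symm he₂.symm)

theorem edgeDisjoint_liftPath {Q : Fin k → List V} (hQ : EdgeDisjoint Q)
    (hhead : ∀ i, (Q i).head? = some (s i)) : EdgeDisjoint fun i => liftPath (Q i) i := by
  intro i j hij e hei hej
  rcases mem_pathEdges_liftPath (hhead i) hei with rfl | ⟨e', he', rfl⟩ | ⟨m, hm⟩ <;>
    rcases mem_pathEdges_liftPath (hhead j) hej with h | ⟨e'', he'', h⟩ | ⟨m', hm'⟩
  all_goals first
    | exact hQ i j hij e' he' (by rwa [Sum.inl_injective.prodMap Sum.inl_injective h])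
    | simp_all [Prod.ext_iff]

end Forward

section Backward

variable {V : Type} [Fintype V] [DecidableEq V] {k : ℕ} {E : Finset (V × V)} {s t : Fin k → V}
  {p r : List (ExtVertex V k)}

theorem card_inter_pathEdges_le (hr : r.IsChain fun x y => (x, y) ∈ tailEdges E s t)
    (hrnd : r.Nodup) {i : Fin k} {z : ExtVertex V k} (hlast : r.getLast? = some z)
    (hz : InTail i z) :
    ((pathEdges p).toFinset ∩ (pathEdges r).toFinset).card ≤
      Fintype.card V + k * Fintype.card V := by
  calc _ ≤ (Finset.univ.image (Sum.inl : V → ExtVertex V k) ∪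
        Finset.univ.image fun m => (.inr (.inr (i, m)) : ExtVertex V k)).card := by
        refine Finset.card_le_card_of_injOn Prod.snd (fun e he => ?_)
          ((injOn_snd_pathEdges hrnd).mono fun e he => ?_)
        · rcases snd_inl_or_inTail_of_mem_pathEdges hr hlast hz
            (List.mem_toFinset.mp (Finset.mem_inter.mp he).2) with ⟨v, hv⟩ | ⟨m, hm⟩
          · simp [hv]
          · simp [hm]
        · exact List.mem_toFinset.mp (Finset.mem_inter.mp he).2
    _ ≤ _ := (Finset.card_union_le _ _).trans (add_le_add
        (Finset.card_image_le.trans_eq (Finset.card_univ))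
        (Finset.card_image_le.trans_eq (by simp)))

theorem card_inter_pathEdges_lt (hac : AntConservation E k s t) {i : Fin k} {z : ExtVertex V k}
    (hp : IsPathFrom (tailEdges E s t) p (.inr (.inl i)) z) (hz : outdeg (tailEdges E s t) z = 0)
    {m₀ : Fin (k * Fintype.card V)} (hm₀ : (m₀ : ℕ) = 0)
    (hentry : (.inl (t i), .inr (.inr (i, m₀))) ∉ pathEdges p)
    (hr : r.IsChain fun x y => (x, y) ∈ tailEdges E s t) (hrnd : r.Nodup) {z' : ExtVertex V k}
    (hlast : r.getLast? = some z') (hz' : InTail i z') :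
    ((pathEdges p).toFinset ∩ (pathEdges r).toFinset).card < Fintype.card V := by
  obtain ⟨⟨-, -, hch⟩, hhead, hplast⟩ := hp
  have hentry_pred : tailPred t i m₀ = .inl (t i) := if_pos hm₀
  have hsnd : ∀ e ∈ (pathEdges p).toFinset ∩ (pathEdges r).toFinset,
      e.2 ∈ (Finset.univ.erase (t i)).image (Sum.inl : V → ExtVertex V k) := by
    intro e he
    rw [Finset.mem_inter, List.mem_toFinset, List.mem_toFinset] at he
    rcases snd_inl_or_inTail_of_mem_pathEdges hr hlast hz' he.2 with ⟨v, hv⟩ | ⟨m, hm⟩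
    · refine Finset.mem_image.mpr ⟨v, Finset.mem_erase.mpr ⟨?_, Finset.mem_univ v⟩, hv.symm⟩
      rintro rfl
      have hnotlast : p.getLast? ≠ some (.inl (t i)) := fun h =>
        outdeg_tailEdges_inl_ne_zero hac m₀.pos (t i) (Option.some.inj (h.symm.trans hplast) ▸ hz)
      obtain ⟨y, hy⟩ := exists_mem_pathEdges_of_mem_of_getLast?_ne
        (hv ▸ snd_mem_of_mem_pathEdges he.1) hnotlast
      obtain ⟨m, hm, rfl⟩ := (mem_tailEdges_from_dest hac).mp (hch.rel_of_mem_pathEdges hy)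
      exact hentry (Fin.ext (hm.trans hm₀.symm) ▸ hy)
    · have htail := tail_mem_of_le hch hhead (hm ▸ snd_mem_of_mem_pathEdges he.1)
        (Fin.le_def.mpr (hm₀ ▸ Nat.zero_le m))
      exact absurd (hentry_pred ▸ tailPred_mem_pathEdges hch hhead htail) hentry
  calc _ ≤ ((Finset.univ.erase (t i)).image (Sum.inl : V → ExtVertex V k)).card :=
        Finset.card_le_card_of_injOn Prod.snd hsnd
          ((injOn_snd_pathEdges hrnd).mono fun e he =>
            List.mem_toFinset.mp (Finset.mem_inter.mp he).2)
    _ ≤ (Finset.univ.erase (t i)).card := Finset.card_image_le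
    _ < Fintype.card V := Finset.card_erase_lt_of_mem (Finset.mem_univ _)

theorem exists_path_of_mem_pathEdges {i : Fin k} {z : ExtVertex V k}
    (hp : IsPathFrom (tailEdges E s t) p (.inr (.inl i)) z) {m : Fin (k * Fintype.card V)}
    (hentry : (.inl (t i), .inr (.inr (i, m))) ∈ pathEdges p) :
    ∃ q : List V, IsPathFrom E q (s i) (t i) ∧
      ∀ e ∈ pathEdges q, Prod.map Sum.inl Sum.inl e ∈ pathEdges p := by
  obtain ⟨⟨-, hnd, hch⟩, hhead, -⟩ := hp
  obtain ⟨r, rfl⟩ := List.head?_eq_some_iff.mp hhead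
  have hrhead : ∀ y ∈ r.head?, y = .inl (s i) := fun y hy =>
    mem_tailEdges_source.mp (hch.rel_head? hy)
  obtain ⟨q, u, rfl, hu⟩ := exists_eq_map_inl_append hch.tail fun j hj => by
    simpa using hrhead _ hj
  have hedges : ∀ e, e ∈ pathEdges (.inr (.inl i) :: (q.map Sum.inl ++ u)) ↔
      e ∈ pathEdges [.inr (.inl i)] ∨ (e ∈ (pathEdges q).map (Prod.map Sum.inl Sum.inl) ∨
        e ∈ pathEdges u ∨ e.1 ∈ (q.map Sum.inl).getLast? ∧ e.2 ∈ u.head?) ∨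
      e.1 ∈ [.inr (.inl i)].getLast? ∧ e.2 ∈ (q.map Sum.inl ++ u).head? := fun e => by
    rw [← List.singleton_append, mem_pathEdges_append, mem_pathEdges_append, pathEdges_map]
  have hlast : q.getLast? = some (t i) := by
    rcases (hedges _).mp hentry with h | (h | h | ⟨h, -⟩) | ⟨h, -⟩
    · simp at h
    · simp at h
    · obtain ⟨j, m', h'⟩ := hu _ (fst_mem_of_mem_pathEdges h)
      simp at h'
    · simpa using h
    · simp at h
  have hne : q ≠ [] := by rintro rfl; simp at hlast
  have hnd' : (q.map Sum.inl : List (ExtVertex V k)).Nodup :=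
    ((List.nodup_cons.mp hnd).2.sublist (List.sublist_append_left _ _))
  refine ⟨q, ⟨⟨hne, hnd'.of_map _, ?_⟩, ?_, hlast⟩, fun e he => (hedges _).mpr ?_⟩
  · exact ((List.isChain_map _).mp hch.tail.left_of_append).imp fun _ _ => mem_tailEdges_inl_inl.mp
  · obtain ⟨a, q', rfl⟩ := List.exists_cons_of_ne_nil hne
    simpa using hrhead (.inl a) (by simp)
  · exact .inr (.inl (.inl (List.mem_map_of_mem he)))

theorem exists_entry_mem_pathEdges (hac : AntConservation E k s t)
    {t' : Fin k → ExtVertex V k} (ht' : ∀ i, IsLastTail i (t' i))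
    {R : Fin k → List (ExtVertex V k)}
    (hR : ∀ i, IsPathFrom (tailEdges E s t) (R i) (.inr (.inl i)) (t' i))
    {w : Fin k → ExtVertex V k × ExtVertex V k → ℕ}
    (hw : ∀ i e, (e ∈ pathEdges (R i) → w i e = 1) ∧ (e ∉ pathEdges (R i) → w i e = 0))
    {P : Fin k → List (ExtVertex V k)}
    (hP : ∀ i, ∃ z, outdeg (tailEdges E s t) z = 0 ∧
      IsPathFrom (tailEdges E s t) (P i) (.inr (.inl i)) z)
    (hsum : k ^ 2 * Fintype.card V ≤ ∑ i, listWeight (w i) (P i)) (i : Fin k) :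
    ∃ m, (.inl (t i), .inr (.inr (i, m))) ∈ pathEdges (P i) := by
  choose z hz hPz using hP
  have hweight (j : Fin k) := listWeight_eq_card_inter (R j) (hPz j).1.2.1 (hw j)
  have hRlast (j : Fin k) : InTail j (t' j) := (ht' j).imp fun _ => And.right
  have hle (j : Fin k) : listWeight (w j) (P j) ≤ Fintype.card V + k * Fintype.card V :=
    hweight j ▸ card_inter_pathEdges_le (hR j).1.2.2 (hR j).1.2.1 (hR j).2.2 (hRlast j)
  have hge := le_add_of_forall_le_of_card_mul_le hle (d := k * Fintype.card V)
    (by rw [Fintype.card_fin, mul_add, ← mul_assoc, ← sq]; omega) i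
  obtain ⟨m, hm, -⟩ := ht' i
  refine ⟨⟨0, by omega⟩, ?_⟩
  by_contra hentry
  have hlt := card_inter_pathEdges_lt hac (hPz i) (hz i) rfl hentry (hR i).1.2.2 (hR i).1.2.1
    (hR i).2.2 (hRlast i)
  have := hweight i
  omega

end Backward

theorem stmt9_general {V : Type} [Fintype V] [DecidableEq V] (E : Finset (V × V)) (k : ℕ)
    (s t : Fin k → V) (hac : AntConservation E k s t)
    (t' : Fin k → V ⊕ Fin k ⊕ Fin k × Fin (k * Fintype.card V))
    (ht' : ∀ i, IsLastTail i (t' i))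
    (R : Fin k → List (V ⊕ Fin k ⊕ Fin k × Fin (k * Fintype.card V)))
    (hR : ∀ i, IsPathFrom (tailEdges E s t) (R i) (Sum.inr (Sum.inl i)) (t' i))
    (w : Fin k → (V ⊕ Fin k ⊕ Fin k × Fin (k * Fintype.card V)) ×
                 (V ⊕ Fin k ⊕ Fin k × Fin (k * Fintype.card V)) → ℕ)
    (hw : ∀ i e, (e ∈ pathEdges (R i) → w i e = 1) ∧ (e ∉ pathEdges (R i) → w i e = 0)) :
    (∃ Q : Fin k → List V, EdgeDisjoint Q ∧ ∀ i, IsPathFrom E (Q i) (s i) (t i)) ↔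
    (∃ P : Fin k → List (V ⊕ Fin k ⊕ Fin k × Fin (k * Fintype.card V)),
      EdgeDisjoint P ∧
      (∀ i, ∃ z, outdeg (tailEdges E s t) z = 0 ∧
        IsPathFrom (tailEdges E s t) (P i) (Sum.inr (Sum.inl i)) z) ∧
      k ^ 2 * Fintype.card V ≤ ∑ i, listWeight (w i) (P i)) := by
  constructor
  · rintro ⟨Q, hQdisj, hQ⟩
    choose m hm ht'_eq using ht'
    have hlift (i : Fin k) := isPathFrom_liftPath (hQ i) (hm i)
    refine ⟨fun i => liftPath (Q i) i, edgeDisjoint_liftPath hQdisj fun i => (hQ i).2.1,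
      fun i => ⟨_, outdeg_tailEdges_lastTail (hm i), hlift i⟩, ?_⟩
    calc k ^ 2 * Fintype.card V = ∑ _i : Fin k, k * Fintype.card V := by simp [sq, mul_assoc]
      _ ≤ _ := Finset.sum_le_sum fun i _ => by
        rw [listWeight_eq_card_inter (R i) (hlift i).1.2.1 (hw i)]
        exact le_card_inter_pathEdges (hlift i).1.2.2 (hlift i).2.1 (hR i).1.2.2 (hR i).2.1
          (hm i) (List.mem_of_getLast? (hlift i).2.2) (ht'_eq i ▸ List.mem_of_getLast? (hR i).2.2)
  · rintro ⟨P, hPdisj, hP, hsum⟩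
    choose m hentry using exists_entry_mem_pathEdges hac ht' hR hw hP hsum
    choose z _ hPz using hP
    choose Q hQ hQP using fun i => exists_path_of_mem_pathEdges (hPz i) (hentry i)
    exact ⟨Q, fun i j hij e hi hj => hPdisj i j hij _ (hQP i e hi) (hQP j e hj), hQ⟩

/-- `G` contains `k` pairwise edge-disjoint paths, the `i`-th from `sᵢ`
to `tᵢ`, if and only if the tail-construction graph `G'` (with indicator weights coming
from chosen paths `Rᵢ` from `sᵢ'` to `tᵢ'`) contains `k` pairwise edge-disjoint paths
`P₁, …, P_k`, with `Pᵢ` starting at `sᵢ'` and ending at some vertex of outdegree 0, of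
total cost at least `k² · |V|`. -/
theorem stmt9 {V : Type} [Fintype V] [DecidableEq V] (E : Finset (V × V)) (k : ℕ)
    (s t : Fin k → V) (hacyc : Acyclic E) (hac : AntConservation E k s t)
    (t' : Fin k → V ⊕ Fin k ⊕ Fin k × Fin (k * Fintype.card V))
    (ht' : ∀ i, IsLastTail i (t' i))
    (R : Fin k → List (V ⊕ Fin k ⊕ Fin k × Fin (k * Fintype.card V)))
    (hR : ∀ i, IsPathFrom (tailEdges E s t) (R i) (Sum.inr (Sum.inl i)) (t' i))
    (w : Fin k → (V ⊕ Fin k ⊕ Fin k × Fin (k * Fintype.card V)) ×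
                 (V ⊕ Fin k ⊕ Fin k × Fin (k * Fintype.card V)) → ℕ)
    (hw : ∀ i e, (e ∈ pathEdges (R i) → w i e = 1) ∧ (e ∉ pathEdges (R i) → w i e = 0)) :
    (∃ Q : Fin k → List V, EdgeDisjoint Q ∧ ∀ i, IsPathFrom E (Q i) (s i) (t i)) ↔
    (∃ P : Fin k → List (V ⊕ Fin k ⊕ Fin k × Fin (k * Fintype.card V)),
      EdgeDisjoint P ∧
      (∀ i, ∃ z, outdeg (tailEdges E s t) z = 0 ∧
        IsPathFrom (tailEdges E s t) (P i) (Sum.inr (Sum.inl i)) z) ∧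
      k ^ 2 * Fintype.card V ≤ ∑ i, listWeight (w i) (P i)) :=
  stmt9_general E k s t hac t' ht' R hR w hw
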